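/- Let 𝔤 be a complex Lie algebra with involution θ and Cartan decomposition 𝔤 = 𝔨 ⊕ 𝔭. For each z ∈ ℂ define a bracket on 𝔤 by [x,y]_z = z·[x,y] if x,y ∈ 𝔭, and [x,y]_z = [x,y] otherwise (extended bilinearly using the decomposition). Then for every z ∈ ℂ, [·,·]_z satisfies the Jacobi identity and antisymmetry, i.e. (𝔤, [·,·]_z) is a Lie algebra. -/

import Mathlib

/-!
Write `x = k x + p x` with `θ (k x) = k x` and `θ (p x) = - p x`. Since `θ` is a Lie
homomorphism, `[𝔨, 𝔨] ⊆ 𝔨`, `[𝔨, 𝔭] ⊆ 𝔭` and `[𝔭, 𝔭] ⊆ 𝔨`, so the `𝔨`- and `𝔭`-components of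
`[y, w]_z` are `[k y, k w] + z [p y, p w]` and `[k y, p w] + [p y, k w]`. Substituting these into
`[x, [y, w]_z]_z` turns the Leibniz identity for `[·,·]_z` into a sum of Leibniz identities of `L`,
one for each power of `z`.
-/

namespace LieHom

variable {K L : Type*} [Field K] [LieRing L] [LieAlgebra K L]
  (θ : L →ₗ⁅K⁆ L)

def evenPart (x : L) : L := (2⁻¹ : K) • (x + θ x)

def oddPart (x : L) : L := (2⁻¹ : K) • (x - θ x)

def contractedBracket (z : K) (x y : L) : L :=
  ⁅θ.evenPart x, θ.evenPart y⁆ + ⁅θ.evenPart x, θ.oddPart y⁆ + ⁅θ.oddPart x, θ.evenPart y⁆ +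
    z • ⁅θ.oddPart x, θ.oddPart y⁆

variable {θ}

theorem map_evenPart (hθ : Function.Involutive θ) (x : L) : θ (θ.evenPart x) = θ.evenPart x := by
  simp only [evenPart, map_smul, map_add, hθ x, add_comm]

theorem map_oddPart (hθ : Function.Involutive θ) (x : L) : θ (θ.oddPart x) = - θ.oddPart x := by
  simp only [oddPart, map_smul, map_sub, hθ x, ← smul_neg, neg_sub]

theorem map_contractedBracket (hθ : Function.Involutive θ) (z : K) (x y : L) :
    θ (θ.contractedBracket z x y) =
      ⁅θ.evenPart x, θ.evenPart y⁆ - ⁅θ.evenPart x, θ.oddPart y⁆ - ⁅θ.oddPart x, θ.evenPart y⁆ +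
        z • ⁅θ.oddPart x, θ.oddPart y⁆ := by
  simp only [contractedBracket, map_add, map_smul, map_lie, map_evenPart hθ, map_oddPart hθ,
    lie_neg, neg_lie, neg_neg]
  abel

theorem evenPart_contractedBracket [CharZero K] (hθ : Function.Involutive θ) (z : K) (x y : L) :
    θ.evenPart (θ.contractedBracket z x y) =
      ⁅θ.evenPart x, θ.evenPart y⁆ + z • ⁅θ.oddPart x, θ.oddPart y⁆ := by
  rw [evenPart, map_contractedBracket hθ, contractedBracket]
  module

theorem oddPart_contractedBracket [CharZero K] (hθ : Function.Involutive θ) (z : K) (x y : L) :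
    θ.oddPart (θ.contractedBracket z x y) =
      ⁅θ.evenPart x, θ.oddPart y⁆ + ⁅θ.oddPart x, θ.evenPart y⁆ := by
  rw [oddPart, map_contractedBracket hθ, contractedBracket]
  module

variable (θ) in
theorem contractedBracket_swap (z : K) (x y : L) :
    θ.contractedBracket z x y = - θ.contractedBracket z y x := by
  simp only [contractedBracket, ← lie_skew (θ.evenPart y), ← lie_skew (θ.oddPart y)]
  module

theorem contractedBracket_leibniz [CharZero K] (hθ : Function.Involutive θ) (z : K) (x y w : L) :
    θ.contractedBracket z x (θ.contractedBracket z y w) =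
      θ.contractedBracket z (θ.contractedBracket z x y) w +
        θ.contractedBracket z y (θ.contractedBracket z x w) := by
  rw [contractedBracket.eq_1 θ z x, contractedBracket.eq_1 θ z (θ.contractedBracket z x y),
    contractedBracket.eq_1 θ z y (θ.contractedBracket z x w)]
  simp only [evenPart_contractedBracket hθ, oddPart_contractedBracket hθ, lie_add, add_lie,
    lie_smul, smul_lie, lie_lie]
  module

end LieHom

/-- Given an involution θ of a complex Lie algebra 𝔤 with Cartan
decomposition 𝔤 = 𝔨 ⊕ 𝔭 (projections k(x) = (x+θx)/2, p(x) = (x−θx)/2), the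
contracted bracket [x,y]_z = [k x, k y] + [k x, p y] + [p x, k y] + z[p x, p y]
is antisymmetric and satisfies the Jacobi (Leibniz) identity for every z ∈ ℂ. -/
theorem stmt_1 (L : Type*) [LieRing L] [LieAlgebra ℂ L]
    (θ : L →ₗ⁅ℂ⁆ L) (hθ : ∀ x, θ (θ x) = x) (z : ℂ) :
    let k : L → L := fun x => (2⁻¹ : ℂ) • (x + θ x)
    let p : L → L := fun x => (2⁻¹ : ℂ) • (x - θ x)
    let bz : L → L → L := fun x y =>
      ⁅k x, k y⁆ + ⁅k x, p y⁆ + ⁅p x, k y⁆ + z • ⁅p x, p y⁆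
    (∀ x y : L, bz x y = - bz y x) ∧
    (∀ x y w : L, bz x (bz y w) = bz (bz x y) w + bz y (bz x w)) :=
  ⟨θ.contractedBracket_swap z, θ.contractedBracket_leibniz hθ z⟩
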